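/- Let C ⊆ ℝ^n be closed, φ : ℝ^n → ℝ^l continuously differentiable, Q = φ(C), ȳ ∈ Q, and Ψ(y) = φ^{-1}(y) ∩ C. If Ψ is inner calm* at ȳ wrt dom Ψ = Q in the fuzzy sense, then T_Q(ȳ) = ⋃_{x̄ ∈ Ψ(ȳ)} ∇φ(x̄)(T_C(x̄)). -/

import Mathlib

open Filter Topology

/-- The tangent (contingent) cone to `Ω` at `x`. -/
def SeqTangent {E : Type*} [NormedAddCommGroup E] [NormedSpace ℝ E]
    (Ω : Set E) (x : E) : Set E :=
  {u | ∃ t : ℕ → ℝ, ∃ w : ℕ → E, (∀ k, 0 < t k) ∧ Tendsto t atTop (𝓝 0) ∧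
    Tendsto w atTop (𝓝 u) ∧ ∀ k, x + t k • w k ∈ Ω}

/-- The sequence `y` converges to `yb` from direction `v`. -/
def ConvFromDir {E : Type*} [NormedAddCommGroup E] [NormedSpace ℝ E]
    (yb v : E) (y : ℕ → E) : Prop :=
  ∃ t : ℕ → ℝ, ∃ w : ℕ → E, (∀ k, 0 < t k) ∧ Tendsto t atTop (𝓝 0) ∧
    Tendsto w atTop (𝓝 v) ∧ ∀ k, y k = yb + t k • w k

/-- `S` is inner semicompact at `yb` with respect to `Ω`. -/
def InnerSemicompactAt {E F : Type*} [NormedAddCommGroup E] [NormedAddCommGroup F]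
    (S : E → Set F) (Ω : Set E) (yb : E) : Prop :=
  ∀ y : ℕ → E, (∀ k, y k ∈ Ω) → Tendsto y atTop (𝓝 yb) →
    ∃ φ : ℕ → ℕ, StrictMono φ ∧ ∃ x : ℕ → F, ∃ xb : F,
      (∀ k, x k ∈ S (y (φ k))) ∧ Tendsto x atTop (𝓝 xb)

/-- `S` is inner calm* at `yb` wrt `Ω` in direction `v` in the fuzzy sense. -/
def FuzzyInnerCalmStarDirAt {E F : Type*} [NormedAddCommGroup E] [NormedSpace ℝ E]
    [NormedAddCommGroup F]
    (S : E → Set F) (Ω : Set E) (yb : E) (v : E) : Prop :=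
  v ∉ SeqTangent Ω yb ∨
    ∃ κ : ℝ, 0 < κ ∧ ∃ y : ℕ → E, (∀ k, y k ∈ Ω) ∧ ConvFromDir yb v y ∧
      ∃ x : ℕ → F, ∃ xb : F, (∀ k, x k ∈ S (y k)) ∧
        ∀ k, ‖x k - xb‖ ≤ κ * ‖y k - yb‖

/-- `S` is inner calm* at `yb` wrt `Ω` in the fuzzy sense. -/
def FuzzyInnerCalmStarAt {E F : Type*} [NormedAddCommGroup E] [NormedSpace ℝ E]
    [NormedAddCommGroup F]
    (S : E → Set F) (Ω : Set E) (yb : E) : Prop :=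
  ∀ v : E, ‖v‖ = 1 → FuzzyInnerCalmStarDirAt S Ω yb v

/-!
Difference quotients of `φ` along sequences in `C` shows that `∇φ(x̄)` maps `T_C(x̄)` into
`T_Q(φ x̄)`. Conversely, a unit direction `v ∈ T_Q(ȳ)` is approached by points
`y_k = ȳ + t_k w_k`, and calmness lifts them to `x_k ∈ Ψ(y_k)` with
`‖x_k - x̄‖ ≤ κ t_k ‖w_k‖`. The quotients `(x_k - x̄) / t_k` are therefore bounded, so a
subsequence converges to some `w̄ ∈ T_C(x̄)`; along it `x_k → x̄`, which puts `x̄` in `Ψ(ȳ)`,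
and the chain rule for difference quotients gives `∇φ(x̄) w̄ = lim w_k = v`.
-/

open Set

variable {E F : Type*} [NormedAddCommGroup E] [NormedSpace ℝ E]
  [NormedAddCommGroup F] [NormedSpace ℝ F]

namespace SeqTangent

variable {Ω : Set E} {x u : E}

lemma zero_mem (hx : x ∈ Ω) : (0 : E) ∈ SeqTangent Ω x :=
  ⟨fun k => 1 / (k + 1), fun _ => 0, fun _ => by positivity,
    tendsto_one_div_add_atTop_nhds_zero_nat, tendsto_const_nhds, fun _ => by simpa using hx⟩

lemma smul_mem {c : ℝ} (hc : 0 < c) (hu : u ∈ SeqTangent Ω x) : c • u ∈ SeqTangent Ω x := by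
  obtain ⟨t, w, ht, ht0, hw, hmem⟩ := hu
  refine ⟨fun k => t k / c, fun k => c • w k, fun k => div_pos (ht k) hc,
    by simpa using ht0.div_const c, hw.const_smul c, fun k => ?_⟩
  simpa only [smul_smul, div_mul_cancel₀ _ hc.ne'] using hmem k

lemma exists_subseq_tendsto_mem [ProperSpace E] {t : ℕ → ℝ} {w : ℕ → E} {M : ℝ}
    (ht : ∀ k, 0 < t k) (ht0 : Tendsto t atTop (𝓝 0)) (hmem : ∀ k, x + t k • w k ∈ Ω)
    (hM : ∀ k, ‖w k‖ ≤ M) :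
    ∃ ψ : ℕ → ℕ, StrictMono ψ ∧ ∃ wb ∈ SeqTangent Ω x, Tendsto (w ∘ ψ) atTop (𝓝 wb) := by
  obtain ⟨wb, -, ψ, hψ, hconv⟩ := tendsto_subseq_of_bounded
    (Metric.isBounded_closedBall (x := (0 : E)) (r := M)) (x := w) (by simpa using hM)
  exact ⟨ψ, hψ, wb, ⟨t ∘ ψ, w ∘ ψ, fun k => ht _, ht0.comp hψ.tendsto_atTop, hconv,
    fun k => hmem _⟩, hconv⟩

end SeqTangent

lemma ConvFromDir.tendsto {yb v : F} {y : ℕ → F} (hy : ConvFromDir yb v y) :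
    Tendsto y atTop (𝓝 yb) := by
  obtain ⟨t, w, -, ht0, hw, hy⟩ := hy
  rw [funext hy]
  simpa using tendsto_const_nhds.add (ht0.smul hw)

lemma HasFDerivAt.tendsto_inv_smul_sub {φ : E → F} {φ' : E →L[ℝ] F} {x : E}
    (hφ : HasFDerivAt φ φ' x) {t : ℕ → ℝ} {w : ℕ → E} {wb : E} (ht : ∀ k, t k ≠ 0)
    (ht0 : Tendsto t atTop (𝓝 0)) (hw : Tendsto w atTop (𝓝 wb)) :
    Tendsto (fun k => (t k)⁻¹ • (φ (x + t k • w k) - φ x)) atTop (𝓝 (φ' wb)) :=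
  (hasFDerivWithinAt_univ.2 hφ).lim (by simpa using ht0.smul hw)
    (.of_forall fun _ => mem_univ _) (hw.congr fun k => (inv_smul_smul₀ (ht k) _).symm)

lemma HasFDerivAt.mapsTo_seqTangent {φ : E → F} {φ' : E →L[ℝ] F} {x : E}
    (hφ : HasFDerivAt φ φ' x) (C : Set E) :
    MapsTo φ' (SeqTangent C x) (SeqTangent (φ '' C) (φ x)) := by
  rintro u ⟨t, w, ht, ht0, hw, hmem⟩
  refine ⟨t, fun k => (t k)⁻¹ • (φ (x + t k • w k) - φ x), ht, ht0,
    hφ.tendsto_inv_smul_sub (fun k => (ht k).ne') ht0 hw, fun k => ?_⟩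
  rw [smul_inv_smul₀ (ht k).ne', add_sub_cancel]
  exact mem_image_of_mem φ (hmem k)

theorem mem_fderiv_image_seqTangent_of_calm [ProperSpace E] {C : Set E} (hC : IsClosed C)
    {φ : E → F} (hφ : Differentiable ℝ φ) {yb v : F} {y : ℕ → F} (hy : ConvFromDir yb v y)
    {x : ℕ → E} {xb : E} {κ : ℝ} (hx : ∀ k, x k ∈ φ ⁻¹' {y k} ∩ C)
    (hxy : ∀ k, ‖x k - xb‖ ≤ κ * ‖y k - yb‖) :
    xb ∈ φ ⁻¹' {yb} ∩ C ∧ v ∈ fderiv ℝ φ xb '' SeqTangent C xb := by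
  have hyb := hy.tendsto
  obtain ⟨t, w, ht, ht0, hw, hy⟩ := hy
  have hφx : ∀ k, φ (x k) = yb + t k • w k := fun k => (hx k).1.trans (hy k)
  set u := fun k => (t k)⁻¹ • (x k - xb)
  have hxu : ∀ k, x k = xb + t k • u k := fun k => by
    simp only [u, smul_inv_smul₀ (ht k).ne', add_sub_cancel]
  obtain ⟨M, hM⟩ := (hw.norm.const_mul κ).bddAbove_range
  have hu : ∀ k, ‖u k‖ ≤ M := fun k => calc
    ‖u k‖ = (t k)⁻¹ * ‖x k - xb‖ := by
      rw [norm_smul, norm_inv, Real.norm_of_nonneg (ht k).le]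
    _ ≤ (t k)⁻¹ * (κ * (t k * ‖w k‖)) := by
      refine mul_le_mul_of_nonneg_left ?_ (inv_nonneg.2 (ht k).le)
      simpa [hy, norm_smul, Real.norm_of_nonneg (ht k).le] using hxy k
    _ = κ * ‖w k‖ := by field_simp [(ht k).ne']
    _ ≤ M := hM ⟨k, rfl⟩
  obtain ⟨ψ, hψ, wb, hwb, hconv⟩ :=
    SeqTangent.exists_subseq_tendsto_mem ht ht0 (fun k => hxu k ▸ (hx k).2) hu
  have htψ := ht0.comp hψ.tendsto_atTop
  have hxψ : Tendsto (x ∘ ψ) atTop (𝓝 xb) := by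
    simpa [Function.comp_def, hxu] using tendsto_const_nhds.add (htψ.smul hconv)
  have hxbC : xb ∈ C := hC.mem_of_tendsto hxψ (.of_forall fun k => (hx _).2)
  have hφxb : φ xb = yb := tendsto_nhds_unique
    (((hφ xb).continuousAt.tendsto.comp hxψ).congr fun k => (hx (ψ k)).1)
    (hyb.comp hψ.tendsto_atTop)
  refine ⟨⟨hφxb, hxbC⟩, wb, hwb, tendsto_nhds_unique
    ((hφ xb).hasFDerivAt.tendsto_inv_smul_sub (fun k => (ht (ψ k)).ne') htψ hconv)
    ((hw.comp hψ.tendsto_atTop).congr fun k => ?_)⟩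
  simp only [Function.comp_apply, ← hxu, hφx, hφxb, add_sub_cancel_left,
    inv_smul_smul₀ (ht (ψ k)).ne']

theorem stmt_12_general {n l : ℕ}
    (C : Set (EuclideanSpace ℝ (Fin n))) (hC : IsClosed C)
    (φ : EuclideanSpace ℝ (Fin n) → EuclideanSpace ℝ (Fin l)) (hφ : ContDiff ℝ 1 φ)
    (yb : EuclideanSpace ℝ (Fin l)) (hyb : yb ∈ φ '' C)
    (hic : FuzzyInnerCalmStarAt (fun y => φ ⁻¹' {y} ∩ C) (φ '' C) yb) :
    SeqTangent (φ '' C) yb =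
      ⋃ xb ∈ φ ⁻¹' {yb} ∩ C, fderiv ℝ φ xb '' SeqTangent C xb := by
  have hφ' : Differentiable ℝ φ := hφ.differentiable one_ne_zero
  refine subset_antisymm (fun u hu => ?_) (iUnion₂_subset fun xb hxb => ?_)
  · obtain rfl | hu0 := eq_or_ne u 0
    · obtain ⟨xb, hxbC, rfl⟩ := hyb
      exact mem_biUnion ⟨rfl, hxbC⟩ ⟨0, SeqTangent.zero_mem hxbC, map_zero _⟩
    have hn : 0 < ‖u‖ := norm_pos_iff.2 hu0
    rcases hic (‖u‖⁻¹ • u) (norm_smul_inv_norm hu0) with hvT | ⟨κ, -, y, -, hy, x, xb, hx, hxy⟩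
    · exact absurd (SeqTangent.smul_mem (inv_pos.2 hn) hu) hvT
    obtain ⟨hxb, wb, hwb, hDwb⟩ := mem_fderiv_image_seqTangent_of_calm hC hφ' hy hx hxy
    refine mem_biUnion hxb ⟨‖u‖ • wb, SeqTangent.smul_mem hn hwb, ?_⟩
    rw [map_smul, hDwb, smul_inv_smul₀ hn.ne']
  · rw [← hxb.1]
    exact ((hφ' xb).hasFDerivAt.mapsTo_seqTangent C).image_subset

/-- Tangents to image sets, differentiable case: under fuzzy inner calmness* of
`Ψ(y) = φ⁻¹(y) ∩ C` at `yb` wrt `Q = φ(C)`,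
`T_Q(yb) = ⋃_{xb ∈ Ψ(yb)} ∇φ(xb)(T_C(xb))`. -/
theorem stmt_12 {n l : ℕ}
    (C : Set (EuclideanSpace ℝ (Fin n))) (hC : IsClosed C)
    (φ : EuclideanSpace ℝ (Fin n) → EuclideanSpace ℝ (Fin l)) (hφ : ContDiff ℝ 1 φ)
    (yb : EuclideanSpace ℝ (Fin l)) (hyb : yb ∈ φ '' C)
    (hisc : InnerSemicompactAt (fun y => φ ⁻¹' {y} ∩ C) (φ '' C) yb)
    (hic : FuzzyInnerCalmStarAt (fun y => φ ⁻¹' {y} ∩ C) (φ '' C) yb) :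
    SeqTangent (φ '' C) yb =
      ⋃ xb ∈ φ ⁻¹' {yb} ∩ C, fderiv ℝ φ xb '' SeqTangent C xb :=
  stmt_12_general C hC φ hφ yb hyb hic
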